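/- arXiv:1904.04076 — 2 statements merged into one kernel-verified Lean document; each statement's English description precedes it below -/
import Mathlib

section
/- Let A ∈ GLₙ(ℤ), and let X, Y, X', Y' be real symmetric n×n matrices with Y, Y' positive definite. Let U be a real n×n matrix with ᵗA U symmetric, and suppose the invariance relations A(XY⁻¹) = (X'Y'⁻¹)A − (Y'+X'Y'⁻¹X')U and A(Y+XY⁻¹X) = (Y'+X'Y'⁻¹X') ᵗA⁻¹ hold. Then, writing Ω = (Y+XY⁻¹X)⁻¹(X+iY)Y⁻¹ and Ω' = (Y'+X'Y'⁻¹X')⁻¹(X'+iY')Y'⁻¹, one has ᵗA Ω' = Ω A⁻¹ + ᵗU. -/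
/-!
With `T = Y + X Y⁻¹ X` and `Y` invertible, `Ω = T⁻¹ (X Y⁻¹) + i T⁻¹`, so the claim is a formal
identity over any commutative ring, split into a real and an imaginary part. The second relation
says `T' = A T ᵗA`, whence `ᵗA T'⁻¹ = T⁻¹ A⁻¹`, which is the imaginary part. The first relation gives
`X' Y'⁻¹ = (A X Y⁻¹ + T' U) A⁻¹`, and the symmetry of `ᵗA U` turns the resulting term `ᵗA U A⁻¹`
into `ᵗU`. Invertibility of `T` comes from its positive definiteness.
-/

open Matrix Complex

namespace Matrix

variable {m K : Type*} [Fintype m] [DecidableEq m]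

lemma PosDef.add_mul_inv_mul [Field K] [PartialOrder K] [StarRing K] [StarOrderedRing K]
    {X Y : Matrix m m K} (hX : X.IsHermitian) (hY : Y.PosDef) :
    (Y + X * Y⁻¹ * X).PosDef := by
  have := hY.inv.posSemidef.conjTranspose_mul_mul_same X
  rw [hX.eq] at this
  exact hY.add_posSemidef this

lemma map_nonsing_inv {R S : Type*} [CommRing R] [CommRing S] (f : R →+* S) {M : Matrix m m R}
    (hM : IsUnit M.det) : (M.map f)⁻¹ = M⁻¹.map f := by
  refine inv_eq_left_inv ?_
  rw [← Matrix.map_mul, nonsing_inv_mul M hM, Matrix.map_one f f.map_zero f.map_one]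

lemma isUnit_det_map {R S : Type*} [CommRing R] [CommRing S] (f : R →+* S) {M : Matrix m m R}
    (hM : IsUnit M.det) : IsUnit (M.map f).det :=
  f.map_det M ▸ hM.map f

section CommRing

variable [CommRing K] {B T T' P P' U : Matrix m m K}

lemma eq_mul_mul_transpose_of_mul_eq (hB : IsUnit B.det) (h : B * T = T' * (Bᵀ)⁻¹) :
    T' = B * T * Bᵀ := by
  rw [h, nonsing_inv_mul_cancel_right _ _ (by rwa [det_transpose])]

lemma transpose_mul_inv_eq_inv_mul_inv (hB : IsUnit B.det) (h : B * T = T' * (Bᵀ)⁻¹) :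
    Bᵀ * T'⁻¹ = T⁻¹ * B⁻¹ := by
  rw [eq_mul_mul_transpose_of_mul_eq hB h, mul_inv_rev, mul_inv_rev, ← Matrix.mul_assoc,
    mul_nonsing_inv _ (by rwa [det_transpose]), Matrix.one_mul]

lemma transpose_mul_mul_inv_eq_transpose (hB : IsUnit B.det) (hU : (Bᵀ * U).IsSymm) :
    Bᵀ * U * B⁻¹ = Uᵀ := by
  rw [← hU.eq, transpose_mul, transpose_transpose, mul_nonsing_inv_cancel_right _ _ hB]

lemma transpose_mul_inv_mul_eq_of_mul_eq_sub (hB : IsUnit B.det) (hT : IsUnit T.det)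
    (hU : (Bᵀ * U).IsSymm) (h1 : B * P = P' * B - T' * U) (h2 : B * T = T' * (Bᵀ)⁻¹) :
    Bᵀ * (T'⁻¹ * P') = T⁻¹ * P * B⁻¹ + Uᵀ := by
  have hP' : P' = (B * P + T' * U) * B⁻¹ := by
    rw [h1, sub_add_cancel, mul_nonsing_inv_cancel_right _ _ hB]
  have hT' : T⁻¹ * B⁻¹ * T' = Bᵀ := by
    rw [eq_mul_mul_transpose_of_mul_eq hB h2, ← Matrix.mul_assoc, Matrix.mul_assoc T⁻¹,
      nonsing_inv_mul_cancel_left _ _ hB, nonsing_inv_mul _ hT, Matrix.one_mul]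
  calc Bᵀ * (T'⁻¹ * P')
      = T⁻¹ * B⁻¹ * ((B * P + T' * U) * B⁻¹) := by
        rw [← Matrix.mul_assoc, transpose_mul_inv_eq_inv_mul_inv hB h2, hP']
    _ = T⁻¹ * (B⁻¹ * B) * P * B⁻¹ + T⁻¹ * B⁻¹ * T' * U * B⁻¹ := by noncomm_ring
    _ = T⁻¹ * P * B⁻¹ + Uᵀ := by
        rw [nonsing_inv_mul _ hB, Matrix.mul_one, hT', transpose_mul_mul_inv_eq_transpose hB hU]

/-- For `c = i` and invertible `Y`, `X - iY`, this is `(X - iY)⁻¹`, since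
`Y + X Y⁻¹ X = (X + iY) Y⁻¹ (X - iY)`. -/
noncomputable def omegaMatrix (c : K) (X Y : Matrix m m K) : Matrix m m K :=
  (Y + X * Y⁻¹ * X)⁻¹ * (X + c • Y) * Y⁻¹

lemma omegaMatrix_eq (c : K) (X : Matrix m m K) {Y : Matrix m m K} (hY : IsUnit Y.det) :
    omegaMatrix c X Y = (Y + X * Y⁻¹ * X)⁻¹ * (X * Y⁻¹) + c • (Y + X * Y⁻¹ * X)⁻¹ := by
  rw [omegaMatrix, Matrix.mul_add, Matrix.add_mul, mul_smul_comm, smul_mul_assoc,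
    mul_nonsing_inv_cancel_right _ _ hY, Matrix.mul_assoc]

theorem transpose_mul_omegaMatrix (c : K) {X Y X' Y' : Matrix m m K}
    (hB : IsUnit B.det) (hY : IsUnit Y.det) (hY' : IsUnit Y'.det)
    (hT : IsUnit (Y + X * Y⁻¹ * X).det) (hU : (Bᵀ * U).IsSymm)
    (h1 : B * (X * Y⁻¹) = X' * Y'⁻¹ * B - (Y' + X' * Y'⁻¹ * X') * U)
    (h2 : B * (Y + X * Y⁻¹ * X) = (Y' + X' * Y'⁻¹ * X') * (Bᵀ)⁻¹) :
    Bᵀ * omegaMatrix c X' Y' = omegaMatrix c X Y * B⁻¹ + Uᵀ := by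
  rw [omegaMatrix_eq c X hY, omegaMatrix_eq c X' hY', Matrix.mul_add, mul_smul_comm,
    transpose_mul_inv_mul_eq_of_mul_eq_sub hB hT hU h1 h2,
    transpose_mul_inv_eq_inv_mul_inv hB h2, Matrix.add_mul, smul_mul_assoc, Matrix.mul_assoc]
  abel

end CommRing

end Matrix

theorem omega_equivariance_general (n : ℕ) (A : Matrix (Fin n) (Fin n) ℤ) (hA : IsUnit A.det)
    (X Y X' Y' : Matrix (Fin n) (Fin n) ℝ)
    (hX : X.IsSymm) (hYpd : Y.PosDef)
    (hY'pd : Y'.PosDef)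
    (U : Matrix (Fin n) (Fin n) ℝ)
    (hU : ((A.map (Int.cast : ℤ → ℝ))ᵀ * U).IsSymm)
    (h1 : A.map (Int.cast : ℤ → ℝ) * (X * Y⁻¹)
      = X' * Y'⁻¹ * A.map (Int.cast : ℤ → ℝ) - (Y' + X' * Y'⁻¹ * X') * U)
    (h2 : A.map (Int.cast : ℤ → ℝ) * (Y + X * Y⁻¹ * X)
      = (Y' + X' * Y'⁻¹ * X') * ((A.map (Int.cast : ℤ → ℝ))ᵀ)⁻¹) :
    (A.map (Int.cast : ℤ → ℂ))ᵀ *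
        ((Y'.map Complex.ofReal + X'.map Complex.ofReal * (Y'.map Complex.ofReal)⁻¹ * X'.map Complex.ofReal)⁻¹
          * (X'.map Complex.ofReal + Complex.I • Y'.map Complex.ofReal) * (Y'.map Complex.ofReal)⁻¹)
      = ((Y.map Complex.ofReal + X.map Complex.ofReal * (Y.map Complex.ofReal)⁻¹ * X.map Complex.ofReal)⁻¹
          * (X.map Complex.ofReal + Complex.I • Y.map Complex.ofReal) * (Y.map Complex.ofReal)⁻¹)
        * (A.map (Int.cast : ℤ → ℂ))⁻¹
      + (U.map Complex.ofReal)ᵀ := by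
  set f := Complex.ofRealHom
  set B := A.map (Int.cast : ℤ → ℝ)
  have hAB : A.map (Int.cast : ℤ → ℂ) = B.map f := by ext; simp [B, f]
  have hB : IsUnit B.det := isUnit_det_map (Int.castRingHom ℝ) hA
  have hY : IsUnit Y.det := (isUnit_iff_isUnit_det Y).mp hYpd.isUnit
  have hY' : IsUnit Y'.det := (isUnit_iff_isUnit_det Y').mp hY'pd.isUnit
  have hT : IsUnit (Y + X * Y⁻¹ * X).det :=
    (isUnit_iff_isUnit_det _).mp (hYpd.add_mul_inv_mul (isHermitian_iff_isSymm.mpr hX)).isUnit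
  have hBt : IsUnit Bᵀ.det := by rwa [det_transpose]
  have hTc : IsUnit (f.mapMatrix (Y + X * Y⁻¹ * X)).det := isUnit_det_map f hT
  have hUc : (f.mapMatrix (Bᵀ * U)).IsSymm := hU.map f
  have h1c := congrArg f.mapMatrix h1
  have h2c := congrArg f.mapMatrix h2
  simp only [map_mul, map_add, map_sub, RingHom.mapMatrix_apply, ← map_nonsing_inv f hY,
    ← map_nonsing_inv f hY', ← map_nonsing_inv f hBt, transpose_map] at hTc hUc h1c h2c
  rw [hAB]
  exact transpose_mul_omegaMatrix I (isUnit_det_map f hB) (isUnit_det_map f hY)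
    (isUnit_det_map f hY') hTc hUc h1c h2c

/-- The Γ-equivariance relation `ᵗA Ω' = Ω A⁻¹ + ᵗU` for `Ω = (Y+XY⁻¹X)⁻¹(X+iY)Y⁻¹`. -/
theorem omega_equivariance (n : ℕ) (A : Matrix (Fin n) (Fin n) ℤ) (hA : IsUnit A.det)
    (X Y X' Y' : Matrix (Fin n) (Fin n) ℝ)
    (hX : X.IsSymm) (hY : Y.IsSymm) (hYpd : Y.PosDef)
    (hX' : X'.IsSymm) (hY' : Y'.IsSymm) (hY'pd : Y'.PosDef)
    (U : Matrix (Fin n) (Fin n) ℝ)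
    (hU : ((A.map (Int.cast : ℤ → ℝ))ᵀ * U).IsSymm)
    (h1 : A.map (Int.cast : ℤ → ℝ) * (X * Y⁻¹)
      = X' * Y'⁻¹ * A.map (Int.cast : ℤ → ℝ) - (Y' + X' * Y'⁻¹ * X') * U)
    (h2 : A.map (Int.cast : ℤ → ℝ) * (Y + X * Y⁻¹ * X)
      = (Y' + X' * Y'⁻¹ * X') * ((A.map (Int.cast : ℤ → ℝ))ᵀ)⁻¹) :
    (A.map (Int.cast : ℤ → ℂ))ᵀ *
        ((Y'.map Complex.ofReal + X'.map Complex.ofReal * (Y'.map Complex.ofReal)⁻¹ * X'.map Complex.ofReal)⁻¹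
          * (X'.map Complex.ofReal + Complex.I • Y'.map Complex.ofReal) * (Y'.map Complex.ofReal)⁻¹)
      = ((Y.map Complex.ofReal + X.map Complex.ofReal * (Y.map Complex.ofReal)⁻¹ * X.map Complex.ofReal)⁻¹
          * (X.map Complex.ofReal + Complex.I • Y.map Complex.ofReal) * (Y.map Complex.ofReal)⁻¹)
        * (A.map (Int.cast : ℤ → ℂ))⁻¹
      + (U.map Complex.ofReal)ᵀ :=
  omega_equivariance_general n A hA X Y X' Y' hX hYpd hY'pd U hU h1 h2
end

section
/- Let N ≥ 1, c ∈ ℝⁿ, A ∈ GLₙ(ℤ), and g̃ : ℝⁿ → ℝ a smooth function. Suppose h : ℝⁿ × ℝⁿ → ℝ satisfies ∂_{y_i} h(x,y) = N (A⁻¹ c)_i for all i and descends to ℝⁿ × Tⁿ in the sense that e^{2πi h(x, y + e_i)} = e^{2πi h(x,y)} for all i and all (x,y). Then N c ∈ ℤⁿ. -/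
open Matrix

/-- If the multiplier phase `h` of a connection-preserving lift satisfies
`∂_{yᵢ} h = N(A⁻¹c)ᵢ` and descends to the torus, then `Nc ∈ ℤⁿ`. -/
theorem lifting_obstruction (n N : ℕ) (hN : 1 ≤ N) (c : Fin n → ℝ)
    (A : Matrix (Fin n) (Fin n) ℤ) (hA : IsUnit A.det)
    (gtilde : (Fin n → ℝ) → ℝ) (hg : ContDiff ℝ (⊤ : ℕ∞) gtilde)
    (h : (Fin n → ℝ) → (Fin n → ℝ) → ℝ)
    (hdiff : ∀ x, Differentiable ℝ (h x))
    (hder : ∀ (x y : Fin n → ℝ) (i : Fin n),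
      fderiv ℝ (h x) y (Pi.single i 1)
        = (N : ℝ) * (((A.map (Int.cast : ℤ → ℝ))⁻¹ *ᵥ c) i))
    (hper : ∀ (x y : Fin n → ℝ) (i : Fin n),
      Complex.exp (2 * (Real.pi : ℂ) * Complex.I * ((h x (y + Pi.single i 1) : ℝ) : ℂ))
        = Complex.exp (2 * (Real.pi : ℂ) * Complex.I * ((h x y : ℝ) : ℂ))) :
    ∀ i, ∃ k : ℤ, (N : ℝ) * c i = (k : ℝ) := by
  set B := A.map (Int.cast : ℤ → ℝ) with hB
  -- step 1: increment of h along e_i equals m i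
  set m : Fin n → ℝ := fun i => (N : ℝ) * ((B⁻¹ *ᵥ c) i) with hm
  have key : ∀ (x y : Fin n → ℝ) (i : Fin n),
      h x (y + Pi.single i 1) = h x y + m i := by
    intro x y i
    have hderiv : ∀ t : ℝ,
        HasDerivAt (fun t : ℝ => h x (y + t • (Pi.single i 1 : Fin n → ℝ))) (m i) t := by
      intro t
      have h1 : HasDerivAt (fun t : ℝ => y + t • (Pi.single i 1 : Fin n → ℝ))
          (Pi.single i 1 : Fin n → ℝ) t := by
        simpa using ((hasDerivAt_id t).smul_const (Pi.single i 1 : Fin n → ℝ)).const_add y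
      have h2 := ((hdiff x) (y + t • (Pi.single i 1 : Fin n → ℝ))).hasFDerivAt
      have := h2.comp_hasDerivAt t h1
      rw [hder x _ i] at this
      exact this
    have hcon : ∀ t : ℝ, (fun t : ℝ => h x (y + t • (Pi.single i 1 : Fin n → ℝ)) - m i * t) t
        = (fun t : ℝ => h x (y + t • (Pi.single i 1 : Fin n → ℝ)) - m i * t) 0 := by
      intro t
      have hd : Differentiable ℝ (fun t : ℝ => h x (y + t • (Pi.single i 1 : Fin n → ℝ)) - m i * t) :=
        fun s => ((hderiv s).sub ((hasDerivAt_id s).const_mul (m i))).differentiableAt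
      have hz : ∀ s : ℝ, deriv (fun t : ℝ => h x (y + t • (Pi.single i 1 : Fin n → ℝ)) - m i * t) s = 0 := by
        intro s
        have := ((hderiv s).sub (((hasDerivAt_id s).const_mul (m i))))
        exact this.deriv.trans (by simp)
      exact is_const_of_deriv_eq_zero hd hz t 0
    have := hcon 1
    simp at this
    linarith
  -- step 2: each m i is an integer
  have hint : ∀ i, ∃ k : ℤ, m i = (k : ℝ) := by
    intro i
    have := hper 0 0 i
    rw [key 0 0 i] at this
    rw [Complex.exp_eq_exp_iff_exists_int] at this
    obtain ⟨k, hk⟩ := this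
    refine ⟨k, ?_⟩
    have h2 : (2 * (Real.pi : ℂ) * Complex.I) * ((h 0 0 + m i : ℝ) : ℂ)
        = (2 * (Real.pi : ℂ) * Complex.I) * ((h 0 0 : ℝ) + (k : ℂ)) := by
      push_cast at hk ⊢
      ring_nf at hk ⊢
      linear_combination hk
    have hne : (2 * (Real.pi : ℂ) * Complex.I) ≠ 0 := by
      simp [Real.pi_ne_zero, Complex.I_ne_zero, Complex.ofReal_ne_zero]
    have := mul_left_cancel₀ hne h2
    have h3 : ((m i : ℝ) : ℂ) = (k : ℂ) := by
      push_cast at this ⊢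
      linear_combination this
    exact_mod_cast h3
  choose v hv using hint
  -- step 3: N c = B *ᵥ v
  have hBdet : IsUnit B.det := by
    have hdet : B.det = ((A.det : ℤ) : ℝ) := by
      rw [hB]
      exact (RingHom.map_det (Int.castRingHom ℝ) A).symm
    rw [hdet]
    rcases Int.isUnit_iff.mp hA with h1 | h1 <;> simp [h1]
  have hinv : B * B⁻¹ = 1 := Matrix.mul_nonsing_inv B hBdet
  have hvec : B *ᵥ (B⁻¹ *ᵥ ((N : ℝ) • c)) = (N : ℝ) • c := by
    rw [Matrix.mulVec_mulVec, hinv, Matrix.one_mulVec]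
  intro i
  refine ⟨∑ j, A i j * v j, ?_⟩
  have h1 : (N : ℝ) * c i = (B *ᵥ (B⁻¹ *ᵥ ((N : ℝ) • c))) i := by
    rw [hvec]; simp
  rw [h1]
  have h2 : B⁻¹ *ᵥ ((N : ℝ) • c) = fun j => (v j : ℝ) := by
    funext j
    rw [Matrix.mulVec_smul]
    simpa [hm] using hv j
  rw [h2]
  simp only [Matrix.mulVec, dotProduct, hB, Matrix.map_apply, Int.cast_sum,
    Int.cast_mul]
end
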